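/- arXiv:2308.16862 — 6 statements merged into one kernel-verified Lean document; each statement's English description precedes it below -/
import Mathlib

section
/- Let b > 1, m > 0, n > 0 be real, q ≥ 0 an integer, z_k := exp(−n(b−1)/(m·b^k)), t := b^{−q}/(b−1), and let p̃(w, β_1,…,β_q) := z_w^{1/(b−1)}·(1−z_w)·∏_{j=1}^q z_{w−j}^{1−β_j}·(1−z_{w−j})^{β_j}. Then (assuming all series converge absolutely) ∑_{w∈ℤ} ∑_{β_1,…,β_q∈{0,1}} p̃(w, β_1,…,β_q) · ( z_w·(ln z_w)²/(1−z_w)² + ∑_{j=1}^q β_j · z_{w−j}·(ln z_{w−j})²/(1−z_{w−j})² ) = ∑_{w∈ℤ} z_w^{1+t}·(ln z_w)²/(1−z_w). Consequently, for m independent registers each distributed according to p̃, the Fisher information equals I = (m/n²)·∑_{w∈ℤ} z_w^{1+t}·(ln z_w)²/(1−z_w). -/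
open Real Finset

/-- z_k = exp(−n(b−1)/(m·b^k)). -/
noncomputable def zf (b m n : ℝ) (k : ℤ) : ℝ :=
  Real.exp (-(n * (b - 1)) / (m * b ^ k))

/-- The simplified register probability mass. -/
noncomputable def ptilde (b m n : ℝ) (q : ℕ) (w : ℤ) (β : Fin q → Fin 2) : ℝ :=
  zf b m n w ^ (1 / (b - 1)) * (1 - zf b m n w) *
    ∏ j : Fin q,
      zf b m n (w - ((j : ℕ) : ℤ) - 1) ^ (1 - (β j : ℕ)) *
        (1 - zf b m n (w - ((j : ℕ) : ℤ) - 1)) ^ ((β j : ℕ))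

/-- z_w·(ln z_w)²/(1−z_w)² + ∑_{j=1}^q β_j·z_{w−j}·(ln z_{w−j})²/(1−z_{w−j})²,
which equals −n²·∂²/∂n² ln p̃. -/
noncomputable def fisherBracket (b m n : ℝ) (q : ℕ) (w : ℤ) (β : Fin q → Fin 2) : ℝ :=
  zf b m n w * Real.log (zf b m n w) ^ 2 / (1 - zf b m n w) ^ 2 +
    ∑ j : Fin q, ((β j : ℕ) : ℝ) *
      (zf b m n (w - ((j : ℕ) : ℤ) - 1) *
        Real.log (zf b m n (w - ((j : ℕ) : ℤ) - 1)) ^ 2 /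
          (1 - zf b m n (w - ((j : ℕ) : ℤ) - 1)) ^ 2)

/-! ### Auxiliary definitions and lemmas -/

noncomputable def Dd (b m n : ℝ) (k : ℤ) : ℝ := n * (b - 1) / (m * b ^ k)

noncomputable def aF (b m n : ℝ) (w : ℤ) : ℝ :=
  zf b m n w ^ (1 / (b - 1)) * (1 - zf b m n w) *
    (zf b m n w * Real.log (zf b m n w) ^ 2 / (1 - zf b m n w) ^ 2)

noncomputable def cF (b m n : ℝ) (j : ℤ) (w : ℤ) : ℝ :=
  zf b m n w ^ (1 / (b - 1)) * (1 - zf b m n w) *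
    ((1 - zf b m n (w - j - 1)) *
      (zf b m n (w - j - 1) * Real.log (zf b m n (w - j - 1)) ^ 2 /
        (1 - zf b m n (w - j - 1)) ^ 2))

section aux
variable {b m n : ℝ} (hb : 1 < b) (hm : 0 < m) (hn : 0 < n)

lemma zf_eq (k : ℤ) : zf b m n k = Real.exp (-(Dd b m n k)) := by
  simp [zf, Dd, neg_div]

include hb hm hn in
lemma Dd_pos (k : ℤ) : 0 < Dd b m n k := by
  have hb0 : (0:ℝ) < b := lt_trans one_pos hb
  exact div_pos (mul_pos hn (by linarith)) (mul_pos hm (zpow_pos hb0 k))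

include hb in
lemma Dd_shift (k j : ℤ) : Dd b m n (k + j) = Dd b m n k * b ^ (-j) := by
  have hb0 : b ≠ 0 := by positivity
  rw [Dd, Dd, zpow_add₀ hb0, zpow_neg]
  field_simp

lemma zf_pos (k : ℤ) : 0 < zf b m n k := by rw [zf_eq]; exact exp_pos _

include hb hm hn in
lemma zf_lt_one (k : ℤ) : zf b m n k < 1 := by
  rw [zf_eq, show (1:ℝ) = Real.exp 0 from (Real.exp_zero).symm]
  exact Real.exp_lt_exp.mpr (by linarith [Dd_pos hb hm hn (n := n) k])

lemma log_zf (k : ℤ) : Real.log (zf b m n k) = -(Dd b m n k) := by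
  rw [zf_eq, Real.log_exp]

lemma zf_rpow (k : ℤ) (y : ℝ) : zf b m n k ^ y = Real.exp (-(Dd b m n k) * y) := by
  rw [zf_eq, Real.rpow_def_of_pos (Real.exp_pos _), Real.log_exp]

end aux

lemma sum_pi_prod {q : ℕ} (F : Fin q → Fin 2 → ℝ) :
    ∑ β : Fin q → Fin 2, ∏ i, F i (β i) = ∏ i, (F i 0 + F i 1) := by
  have h := Finset.prod_univ_sum (fun _ : Fin q => (univ : Finset (Fin 2))) F
  simp only [Fintype.piFinset_univ] at h
  rw [← h]
  exact Finset.prod_congr rfl fun i _ => Fin.sum_univ_two _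

lemma sum_pi_prod_weight {q : ℕ} (F : Fin q → Fin 2 → ℝ) (j : Fin q)
    (h1 : ∀ i, F i 0 + F i 1 = 1) :
    ∑ β : Fin q → Fin 2, ((β j : ℕ) : ℝ) * ∏ i, F i (β i) = F j 1 := by
  have key : ∀ β : Fin q → Fin 2, ((β j : ℕ):ℝ) * ∏ i, F i (β i)
      = ∏ i, ((if i = j then ((β i : ℕ):ℝ) else 1) * F i (β i)) := by
    intro β
    rw [Finset.prod_mul_distrib, Finset.prod_ite_eq' univ j (fun i => ((β i : ℕ):ℝ))]
    simp
  simp_rw [key]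
  rw [sum_pi_prod (fun i c => (if i = j then ((c : ℕ):ℝ) else 1) * F i c)]
  have h2 : ∀ i, ((if i = j then (((0 : Fin 2) : ℕ):ℝ) else 1) * F i 0
      + (if i = j then (((1 : Fin 2) : ℕ):ℝ) else 1) * F i 1)
      = if i = j then F i 1 else 1 := by
    intro i
    by_cases hij : i = j <;> simp [hij, h1 i]
  rw [Finset.prod_congr rfl fun i _ => h2 i, Finset.prod_ite_eq' univ j (fun i => F i 1)]
  simp

lemma inner_abstract {q : ℕ} (A B : ℝ) (y G : Fin q → ℝ) :
    ∑ β : Fin q → Fin 2,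
      (A * ∏ j, (y j ^ (1 - (β j : ℕ)) * (1 - y j) ^ ((β j : ℕ)))) *
        (B + ∑ j, ((β j : ℕ):ℝ) * G j)
      = A * B + ∑ j, A * ((1 - y j) * G j) := by
  have hF1 : ∀ i : Fin q,
      (y i ^ (1 - ((0 : Fin 2) : ℕ)) * (1 - y i) ^ (((0 : Fin 2) : ℕ)))
      + (y i ^ (1 - ((1 : Fin 2) : ℕ)) * (1 - y i) ^ (((1 : Fin 2) : ℕ))) = 1 := by
    intro i; simp
  have hexp : ∀ β : Fin q → Fin 2,
      (A * ∏ j, (y j ^ (1 - (β j : ℕ)) * (1 - y j) ^ ((β j : ℕ)))) *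
        (B + ∑ j, ((β j : ℕ):ℝ) * G j)
      = A * B * ∏ i, (y i ^ (1 - (β i : ℕ)) * (1 - y i) ^ ((β i : ℕ)))
        + ∑ i : Fin q, (A * G i) *
            (((β i : ℕ):ℝ) * ∏ i', (y i' ^ (1 - (β i' : ℕ)) * (1 - y i') ^ ((β i' : ℕ)))) := by
    intro β
    rw [mul_add, Finset.mul_sum]
    congr 1
    · ring
    · exact Finset.sum_congr rfl fun i _ => by ring
  rw [Finset.sum_congr rfl fun β _ => hexp β, Finset.sum_add_distrib, Finset.sum_comm]
  congr 1
  · rw [← Finset.mul_sum,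
      sum_pi_prod (fun i c => y i ^ (1 - (c : ℕ)) * (1 - y i) ^ ((c : ℕ)))]
    rw [Finset.prod_congr rfl fun i _ => hF1 i, Finset.prod_const_one, mul_one]
  · refine Finset.sum_congr rfl fun i _ => ?_
    rw [← Finset.mul_sum,
      sum_pi_prod_weight (fun i c => y i ^ (1 - (c : ℕ)) * (1 - y i) ^ ((c : ℕ))) i hF1]
    simp only [Fin.val_one]
    norm_num
    ring

lemma innerSumEq (b m n : ℝ) (q : ℕ) (w : ℤ) :
    ∑ β : Fin q → Fin 2, ptilde b m n q w β * fisherBracket b m n q w β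
      = aF b m n w + ∑ j : Fin q, cF b m n ((j : ℕ) : ℤ) w := by
  simp only [ptilde, fisherBracket, aF, cF]
  exact inner_abstract _ _ _ _

lemma rexp_rpow (x y : ℝ) : Real.exp x ^ y = Real.exp (x * y) := by
  rw [Real.rpow_def_of_pos (Real.exp_pos x), Real.log_exp]

lemma cF_shift (b m n : ℝ) (j w : ℤ) :
    cF b m n j (w + j + 1)
      = zf b m n (w + j + 1) ^ (1 / (b - 1)) * (1 - zf b m n (w + j + 1)) *
        ((1 - zf b m n w) *
          (zf b m n w * Real.log (zf b m n w) ^ 2 / (1 - zf b m n w) ^ 2)) := by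
  have h : w + j + 1 - j - 1 = w := by ring
  rw [cF, h]

lemma pointwise_key (b m n t : ℝ) (hb : 1 < b) (hm : 0 < m) (hn : 0 < n) (q : ℕ)
    (ht : t = b ^ (-(q : ℤ)) / (b - 1)) (w : ℤ) :
    aF b m n w + ∑ j : Fin q, cF b m n ((j : ℕ) : ℤ) (w + ((j : ℕ) : ℤ) + 1)
      = zf b m n w ^ (1 + t) * Real.log (zf b m n w) ^ 2 / (1 - zf b m n w) := by
  have hb0 : (0:ℝ) < b := lt_trans one_pos hb
  have hbne : b ≠ 0 := ne_of_gt hb0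
  have hbm : b - 1 ≠ 0 := by linarith
  have hsh : ∀ j : ℤ, Dd b m n (w + j + 1) = Dd b m n w * b ^ (-(j + 1)) := by
    intro j
    rw [show w + j + 1 = w + (j + 1) by ring, Dd_shift hb]
  simp only [aF, cF_shift, zf_eq, rexp_rpow, Real.log_exp, hsh]
  set d := Dd b m n w with hdd
  have hd : 0 < d := by rw [hdd]; exact Dd_pos hb hm hn w
  have he1 : Real.exp (-d) < 1 := by
    rw [show (1:ℝ) = Real.exp 0 from Real.exp_zero.symm]
    exact Real.exp_lt_exp.mpr (by linarith)
  have hne : 1 - Real.exp (-d) ≠ 0 := ne_of_gt (by linarith)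
  set g : ℕ → ℝ :=
    fun k => Real.exp (-(d * (1 + b ^ (-(k : ℤ)) / (b - 1)))) * (d ^ 2 / (1 - Real.exp (-d)))
    with hg
  have hstep : ∀ j : Fin q,
      Real.exp (-(d * b ^ (-(((j : ℕ) : ℤ) + 1))) * (1 / (b - 1))) *
          (1 - Real.exp (-(d * b ^ (-(((j : ℕ) : ℤ) + 1))))) *
        ((1 - Real.exp (-d)) * (Real.exp (-d) * (-d) ^ 2 / (1 - Real.exp (-d)) ^ 2))
      = g ((j : ℕ) + 1) - g (j : ℕ) := by
    intro j
    have hBB : b ^ (-(((j : ℕ) : ℤ) + 1)) * b = b ^ (-((j : ℕ) : ℤ)) := by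
      rw [← zpow_add_one₀ hbne]; congr 1; ring
    have h1 : Real.exp (-(d * b ^ (-(((j : ℕ) : ℤ) + 1))) * (1 / (b - 1))) * Real.exp (-d)
        = Real.exp (-(d * (1 + b ^ (-(((j : ℕ) : ℤ) + 1)) / (b - 1)))) := by
      rw [← Real.exp_add]; congr 1; field_simp; ring
    have h2 : Real.exp (-(d * b ^ (-(((j : ℕ) : ℤ) + 1))) * (1 / (b - 1))) *
          Real.exp (-(d * b ^ (-(((j : ℕ) : ℤ) + 1)))) * Real.exp (-d)
        = Real.exp (-(d * (1 + b ^ (-((j : ℕ) : ℤ)) / (b - 1)))) := by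
      rw [← Real.exp_add, ← Real.exp_add]; congr 1; rw [← hBB]; field_simp; ring
    have hcast : ((((j : ℕ) + 1 : ℕ)) : ℤ) = ((j : ℕ) : ℤ) + 1 := by push_cast; ring
    rw [hg]
    simp only [hcast]
    rw [← h1, ← h2]
    field_simp
  rw [Finset.sum_congr rfl fun j _ => hstep j,
    Fin.sum_univ_eq_sum_range (fun i => g (i + 1) - g i) q,
    Finset.sum_range_sub g q]
  have h0 : Real.exp (-d * (1 / (b - 1))) * (1 - Real.exp (-d)) *
        (Real.exp (-d) * (-d) ^ 2 / (1 - Real.exp (-d)) ^ 2)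
      = g 0 := by
    have h1 : Real.exp (-d * (1 / (b - 1))) * Real.exp (-d)
        = Real.exp (-(d * (1 + b ^ (-((0 : ℕ) : ℤ)) / (b - 1)))) := by
      rw [← Real.exp_add]; congr 1
      simp only [Nat.cast_zero, neg_zero, zpow_zero]
      field_simp; ring
    rw [hg]
    simp only []
    rw [← h1]
    field_simp
  rw [h0, hg, ht]
  simp only [Nat.cast_zero]
  rw [show -d * (1 + b ^ (-(q : ℤ)) / (b - 1)) = -(d * (1 + b ^ (-(q : ℤ)) / (b - 1))) by ring]
  ring

/-- the Fisher-information sum identity, and consequently the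
Fisher information of m independent registers equals (m/n²)·∑_w z_w^{1+t}(ln z_w)²/(1−z_w). -/
theorem fisher_information_identity (b m n t : ℝ) (hb : 1 < b) (hm : 0 < m) (hn : 0 < n)
    (q : ℕ) (ht : t = b ^ (-(q : ℤ)) / (b - 1))
    (hL : Summable fun w : ℤ =>
      ∑ β : Fin q → Fin 2, |ptilde b m n q w β * fisherBracket b m n q w β|)
    (hR : Summable fun w : ℤ =>
      |zf b m n w ^ (1 + t) * Real.log (zf b m n w) ^ 2 / (1 - zf b m n w)|) :
    ((∑' w : ℤ, ∑ β : Fin q → Fin 2, ptilde b m n q w β * fisherBracket b m n q w β)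
      = ∑' w : ℤ, zf b m n w ^ (1 + t) * Real.log (zf b m n w) ^ 2 / (1 - zf b m n w)) ∧
    ((m / n ^ 2) *
        (∑' w : ℤ, ∑ β : Fin q → Fin 2, ptilde b m n q w β * fisherBracket b m n q w β)
      = (m / n ^ 2) *
          ∑' w : ℤ, zf b m n w ^ (1 + t) * Real.log (zf b m n w) ^ 2 / (1 - zf b m n w)) := by
  have hz : ∀ k : ℤ, 0 < zf b m n k := fun k => zf_pos k
  have hz1 : ∀ k : ℤ, zf b m n k < 1 := fun k => zf_lt_one hb hm hn k
  have hs : ∀ k : ℤ, (0:ℝ) ≤ 1 - zf b m n k := fun k => by linarith [hz1 k]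
  have hann : ∀ w : ℤ, 0 ≤ aF b m n w := fun w =>
    mul_nonneg (mul_nonneg (Real.rpow_nonneg (hz w).le _) (hs w))
      (div_nonneg (mul_nonneg (hz w).le (sq_nonneg _)) (sq_nonneg _))
  have hcnn : ∀ (j : ℤ) (w : ℤ), 0 ≤ cF b m n j w := fun j w =>
    mul_nonneg (mul_nonneg (Real.rpow_nonneg (hz w).le _) (hs w))
      (mul_nonneg (hs _) (div_nonneg (mul_nonneg (hz _).le (sq_nonneg _)) (sq_nonneg _)))
  have hpt : ∀ (w : ℤ) (β : Fin q → Fin 2), 0 ≤ ptilde b m n q w β := fun w β =>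
    mul_nonneg (mul_nonneg (Real.rpow_nonneg (hz w).le _) (hs w))
      (Finset.prod_nonneg fun j _ =>
        mul_nonneg (pow_nonneg (hz _).le _) (pow_nonneg (hs _) _))
  have hfb : ∀ (w : ℤ) (β : Fin q → Fin 2), 0 ≤ fisherBracket b m n q w β := fun w β =>
    add_nonneg (div_nonneg (mul_nonneg (hz w).le (sq_nonneg _)) (sq_nonneg _))
      (Finset.sum_nonneg fun j _ => mul_nonneg (Nat.cast_nonneg _)
        (div_nonneg (mul_nonneg (hz _).le (sq_nonneg _)) (sq_nonneg _)))
  have habs : (fun w : ℤ =>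
        ∑ β : Fin q → Fin 2, |ptilde b m n q w β * fisherBracket b m n q w β|)
      = fun w : ℤ => aF b m n w + ∑ j : Fin q, cF b m n ((j : ℕ) : ℤ) w := by
    funext w
    rw [← innerSumEq]
    exact Finset.sum_congr rfl fun β _ => abs_of_nonneg (mul_nonneg (hpt w β) (hfb w β))
  have hLsum : Summable (fun w : ℤ =>
      aF b m n w + ∑ j : Fin q, cF b m n ((j : ℕ) : ℤ) w) := habs ▸ hL
  have hasum : Summable (fun w : ℤ => aF b m n w) :=
    Summable.of_nonneg_of_le hann
      (fun w => le_add_of_nonneg_right (Finset.sum_nonneg fun j _ => hcnn _ w)) hLsum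
  have hcsum : ∀ j : Fin q, Summable (fun w : ℤ => cF b m n ((j : ℕ) : ℤ) w) := by
    intro j
    refine Summable.of_nonneg_of_le (fun w => hcnn _ w) (fun w => ?_) hLsum
    calc cF b m n ((j : ℕ) : ℤ) w ≤ ∑ j' : Fin q, cF b m n ((j' : ℕ) : ℤ) w :=
          Finset.single_le_sum (f := fun j' : Fin q => cF b m n ((j' : ℕ) : ℤ) w) (fun j' _ => hcnn _ w) (Finset.mem_univ j)
      _ ≤ _ := le_add_of_nonneg_left (hann w)
  have hcssum : Summable (fun w : ℤ => ∑ j : Fin q, cF b m n ((j : ℕ) : ℤ) w) :=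
    summable_sum fun j _ => hcsum j
  have hshift : ∀ j : Fin q, (∑' w : ℤ, cF b m n ((j : ℕ) : ℤ) w)
      = ∑' w : ℤ, cF b m n ((j : ℕ) : ℤ) (w + ((j : ℕ) : ℤ) + 1) := by
    intro j
    have h := (Equiv.addRight (((j : ℕ) : ℤ) + 1)).tsum_eq
      (fun w => cF b m n ((j : ℕ) : ℤ) w)
    rw [← h]
    refine tsum_congr fun w => ?_
    simp only [Equiv.coe_addRight]
    rw [show w + (((j : ℕ) : ℤ) + 1) = w + ((j : ℕ) : ℤ) + 1 by ring]
  have hcsum' : ∀ j : Fin q,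
      Summable (fun w : ℤ => cF b m n ((j : ℕ) : ℤ) (w + ((j : ℕ) : ℤ) + 1)) := by
    intro j
    have h2 := ((Equiv.addRight (((j : ℕ) : ℤ) + 1)).summable_iff
      (f := fun w => cF b m n ((j : ℕ) : ℤ) w)).mpr (hcsum j)
    refine h2.congr fun w => ?_
    simp only [Function.comp_apply, Equiv.coe_addRight]
    rw [show w + (((j : ℕ) : ℤ) + 1) = w + ((j : ℕ) : ℤ) + 1 by ring]
  have h1 : (∑' w : ℤ, ∑ β : Fin q → Fin 2, ptilde b m n q w β * fisherBracket b m n q w β)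
      = ∑' w : ℤ, zf b m n w ^ (1 + t) * Real.log (zf b m n w) ^ 2 / (1 - zf b m n w) := by
    calc ∑' w : ℤ, ∑ β : Fin q → Fin 2, ptilde b m n q w β * fisherBracket b m n q w β
        = ∑' w : ℤ, (aF b m n w + ∑ j : Fin q, cF b m n ((j : ℕ) : ℤ) w) :=
          tsum_congr fun w => innerSumEq b m n q w
      _ = (∑' w : ℤ, aF b m n w)
            + ∑' w : ℤ, ∑ j : Fin q, cF b m n ((j : ℕ) : ℤ) w := Summable.tsum_add hasum hcssum
      _ = (∑' w : ℤ, aF b m n w)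
            + ∑ j : Fin q, ∑' w : ℤ, cF b m n ((j : ℕ) : ℤ) w := by
          rw [Summable.tsum_finsetSum fun j _ => hcsum j]
      _ = (∑' w : ℤ, aF b m n w)
            + ∑ j : Fin q, ∑' w : ℤ, cF b m n ((j : ℕ) : ℤ) (w + ((j : ℕ) : ℤ) + 1) := by
          rw [Finset.sum_congr rfl fun j _ => hshift j]
      _ = ∑' w : ℤ,
            (aF b m n w + ∑ j : Fin q, cF b m n ((j : ℕ) : ℤ) (w + ((j : ℕ) : ℤ) + 1)) := by
          rw [← Summable.tsum_finsetSum fun j _ => hcsum' j,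
            ← Summable.tsum_add hasum (summable_sum fun j _ => hcsum' j)]
      _ = ∑' w : ℤ, zf b m n w ^ (1 + t) * Real.log (zf b m n w) ^ 2 / (1 - zf b m n w) :=
          tsum_congr fun w => pointwise_key b m n t hb hm hn q ht w
  exact ⟨h1, by rw [h1]⟩
end

section
/- Let b > 1 and a > 0 be real. Then (b² − b + 1)^{−a} − b^{−2a} − (b³ − b + 1)^{−a} + b^{−3a} > 0. -/
open Real

lemma strictConvexOn_rpow_neg {a : ℝ} (ha : 0 < a) :
    StrictConvexOn ℝ (Set.Ioi (0:ℝ)) (fun x : ℝ => x ^ (-a)) := by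
  apply strictConvexOn_of_deriv2_pos (convex_Ioi 0)
  · intro x hx
    exact (Real.continuousAt_rpow_const x (-a) (Or.inl (ne_of_gt hx))).continuousWithinAt
  · intro x hx
    rw [interior_Ioi] at hx
    have hx0 : (0:ℝ) < x := hx
    have hEq : Set.EqOn (deriv fun x : ℝ => x ^ (-a))
        (fun x : ℝ => -a * x ^ (-a - 1)) (Set.Ioi 0) := by
      intro y hy
      exact (Real.hasDerivAt_rpow_const (Or.inl (ne_of_gt hy))).deriv
    have h1 : deriv^[2] (fun x : ℝ => x ^ (-a)) x
        = deriv (fun x : ℝ => -a * x ^ (-a - 1)) x := by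
      simp only [Function.iterate_succ, Function.iterate_zero, Function.comp_apply, id]
      exact Filter.EventuallyEq.deriv_eq
        (Filter.eventuallyEq_of_mem (Ioi_mem_nhds hx0) hEq)
    have h2 : deriv (fun x : ℝ => -a * x ^ (-a - 1)) x
        = -a * ((-a - 1) * x ^ (-a - 1 - 1)) :=
      ((Real.hasDerivAt_rpow_const (p := -a - 1) (Or.inl (ne_of_gt hx0))).const_mul (-a)).deriv
    rw [h1, h2]
    have h3 : -a * ((-a - 1) * x ^ (-a - 1 - 1)) = a * (a + 1) * x ^ (-a - 1 - 1) := by ring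
    rw [h3]
    positivity

/-- positivity of the FGRA coefficient function η₁. -/
theorem eta1_pos (b a : ℝ) (hb : 1 < b) (ha : 0 < a) :
    0 < (b ^ 2 - b + 1) ^ (-a) - b ^ (-(2 * a)) - (b ^ 3 - b + 1) ^ (-a) + b ^ (-(3 * a)) := by
  have hb0 : (0:ℝ) < b := lt_trans one_pos hb
  have h2a : b ^ (-(2 * a)) = (b ^ 2) ^ (-a) := by
    rw [show -(2 * a) = (2:ℝ) * (-a) by ring, Real.rpow_mul hb0.le,
      show ((2:ℝ)) = ((2:ℕ):ℝ) by norm_num, Real.rpow_natCast]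
  have h3a : b ^ (-(3 * a)) = (b ^ 3) ^ (-a) := by
    rw [show -(3 * a) = (3:ℝ) * (-a) by ring, Real.rpow_mul hb0.le,
      show ((3:ℝ)) = ((3:ℕ):ℝ) by norm_num, Real.rpow_natCast]
  rw [h2a, h3a]
  set f : ℝ → ℝ := fun x => x ^ (-a) with hf
  have hconv := strictConvexOn_rpow_neg ha
  set w : ℝ := b ^ 2 - b + 1 with hw
  set z : ℝ := b ^ 3 with hz
  have hwpos : (0:ℝ) < w := by nlinarith
  have hzpos : (0:ℝ) < z := by positivity
  have hne : w ≠ z := by nlinarith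
  set θ : ℝ := b ^ 2 / (b ^ 2 + 1) with hθ
  have hden : (0:ℝ) < b ^ 2 + 1 := by positivity
  have hθpos : 0 < θ := by positivity
  have h1θpos : 0 < 1 - θ := by
    rw [hθ]
    rw [sub_pos, div_lt_one hden]
    linarith
  have hsum : θ + (1 - θ) = 1 := by ring
  have hA := hconv.2 (Set.mem_Ioi.mpr hwpos) (Set.mem_Ioi.mpr hzpos) hne hθpos h1θpos hsum
  have hB := hconv.2 (Set.mem_Ioi.mpr hwpos) (Set.mem_Ioi.mpr hzpos) hne h1θpos hθpos
    (by ring)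
  simp only [smul_eq_mul] at hA hB
  have hx : θ * w + (1 - θ) * z = b ^ 2 := by
    rw [hθ, hw, hz]; field_simp; ring
  have hy : (1 - θ) * w + θ * z = b ^ 3 - b + 1 := by
    rw [hθ, hw, hz]; field_simp; ring
  rw [hx] at hA
  rw [hy] at hB
  have := add_lt_add hA hB
  have hsum2 : θ * f w + (1 - θ) * f z + ((1 - θ) * f w + θ * f z) = f w + f z := by ring
  rw [hsum2] at this
  show 0 < f w - f (b ^ 2) - f (b ^ 3 - b + 1) + f z
  linarith
end

section
/- Let b > 1 and a > 0 be real. Then (b³ − b + 1)^{−a} − (b³ − b² + 1)^{−a} + (b³ − b² + b)^{−a} − b^{−3a} − (b² − b + 1)^{−a} + b^{−2a} + 1 − b^{−a} > 0. -/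
open Real

lemma eta3_aux (a c : ℝ) (ha : 0 < a) (hc : 0 < c) :
    StrictConvexOn ℝ (Set.Ioi (0:ℝ)) (fun x : ℝ => x ^ (-a) - (x + c) ^ (-a)) := by
  have hderiv : ∀ x ∈ Set.Ioi (0:ℝ), HasDerivAt (fun x : ℝ => x ^ (-a) - (x + c) ^ (-a))
      ((-a) * x ^ (-a - 1) - (-a) * (x + c) ^ (-a - 1)) x := by
    intro x hx
    have hx0 : (0:ℝ) < x := hx
    have h1 : HasDerivAt (fun x : ℝ => x ^ (-a)) ((-a) * x ^ (-a - 1)) x :=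
      Real.hasDerivAt_rpow_const (Or.inl hx0.ne')
    have h2 : HasDerivAt (fun x : ℝ => (x + c) ^ (-a)) (1 * (-a) * (x + c) ^ (-a - 1)) x :=
      HasDerivAt.rpow_const ((hasDerivAt_id x).add_const c) (Or.inl (by positivity))
    refine (h1.sub h2).congr_deriv ?_
    ring
  have hd : Set.EqOn (deriv (fun x : ℝ => x ^ (-a) - (x + c) ^ (-a)))
      (fun x : ℝ => (-a) * x ^ (-a - 1) - (-a) * (x + c) ^ (-a - 1)) (Set.Ioi 0) :=
    fun x hx => (hderiv x hx).deriv
  apply strictConvexOn_of_deriv2_pos (convex_Ioi 0)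
  · apply ContinuousOn.sub
    · exact continuousOn_id.rpow_const fun x hx => Or.inl (ne_of_gt hx)
    · exact (continuousOn_id.add continuousOn_const).rpow_const
        fun x hx => Or.inl (ne_of_gt (by show (0:ℝ) < x + c; linarith [show (0:ℝ) < x from hx]))
  · intro x hx
    rw [interior_Ioi] at hx
    have hx0 : (0:ℝ) < x := hx
    have hxc : (0:ℝ) < x + c := by positivity
    have heq : deriv (deriv (fun x : ℝ => x ^ (-a) - (x + c) ^ (-a))) x
        = deriv (fun x : ℝ => (-a) * x ^ (-a - 1) - (-a) * (x + c) ^ (-a - 1)) x := by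
      apply Filter.EventuallyEq.deriv_eq
      exact Filter.eventuallyEq_of_mem (Ioi_mem_nhds hx0) hd
    have h1 : HasDerivAt (fun x : ℝ => (-a) * x ^ (-a - 1))
        ((-a) * ((-a - 1) * x ^ (-a - 1 - 1))) x :=
      (Real.hasDerivAt_rpow_const (Or.inl hx0.ne')).const_mul (-a)
    have h2 : HasDerivAt (fun x : ℝ => (-a) * (x + c) ^ (-a - 1))
        ((-a) * (1 * (-a - 1) * (x + c) ^ (-a - 1 - 1))) x :=
      (HasDerivAt.rpow_const ((hasDerivAt_id x).add_const c) (Or.inl hxc.ne')).const_mul (-a)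
    have h3 : deriv (fun x : ℝ => (-a) * x ^ (-a - 1) - (-a) * (x + c) ^ (-a - 1)) x = _ :=
      (h1.sub h2).deriv
    show 0 < deriv^[2] (fun x : ℝ => x ^ (-a) - (x + c) ^ (-a)) x
    rw [Function.iterate_succ, Function.iterate_one, Function.comp_apply] at *
    rw [heq, h3]
    have hlt : (x + c) ^ (-a - 1 - 1) < x ^ (-a - 1 - 1) :=
      Real.rpow_lt_rpow_of_neg hx0 (by linarith) (by linarith)
    have hpos : 0 < a * (a + 1) * (x ^ (-a - 1 - 1) - (x + c) ^ (-a - 1 - 1)) := by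
      apply mul_pos (by positivity) (by linarith)
    nlinarith [hpos]

/-- positivity of the FGRA coefficient function η₃. -/
theorem eta3_pos (b a : ℝ) (hb : 1 < b) (ha : 0 < a) :
    0 < (b ^ 3 - b + 1) ^ (-a) - (b ^ 3 - b ^ 2 + 1) ^ (-a) + (b ^ 3 - b ^ 2 + b) ^ (-a)
        - b ^ (-(3 * a)) - (b ^ 2 - b + 1) ^ (-a) + b ^ (-(2 * a)) + 1 - b ^ (-a) := by
  have hb0 : (0:ℝ) < b := by linarith
  have hc : (0:ℝ) < b ^ 3 - b ^ 2 := by nlinarith [mul_pos (mul_pos hb0 hb0) (show (0:ℝ) < b - 1 by linarith)]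
  have sc := eta3_aux a (b ^ 3 - b ^ 2) ha hc
  set f : ℝ → ℝ := fun x : ℝ => x ^ (-a) - (x + (b ^ 3 - b ^ 2)) ^ (-a) with hf
  have hx2 : (b ^ 2 : ℝ) ∈ Set.Ioi (0:ℝ) := by simp only [Set.mem_Ioi]; positivity
  have h1m : (1:ℝ) ∈ Set.Ioi (0:ℝ) := by norm_num
  have hne : (b ^ 2 : ℝ) ≠ 1 := by nlinarith
  have ht : 0 < b / (b + 1) := by positivity
  have hs : 0 < 1 / (b + 1) := by positivity
  have hb1 : (b:ℝ) + 1 ≠ 0 := by positivity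
  have hts : b / (b + 1) + 1 / (b + 1) = 1 := by field_simp
  have hst : 1 / (b + 1) + b / (b + 1) = 1 := by field_simp; ring
  have h1 := sc.2 hx2 h1m hne ht hs hts
  have h2 := sc.2 hx2 h1m hne hs ht hst
  rw [smul_eq_mul, smul_eq_mul, smul_eq_mul, smul_eq_mul] at h1 h2
  have e1 : b / (b + 1) * b ^ 2 + 1 / (b + 1) * 1 = b ^ 2 - b + 1 := by
    field_simp; ring
  have e2 : 1 / (b + 1) * b ^ 2 + b / (b + 1) * 1 = b := by
    field_simp
  rw [e1] at h1
  rw [e2] at h2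
  have key : f (b ^ 2 - b + 1) + f b < f (b ^ 2) + f 1 := by
    have h3 := add_lt_add h1 h2
    have h4 : b / (b + 1) * f (b ^ 2) + 1 / (b + 1) * f 1
        + (1 / (b + 1) * f (b ^ 2) + b / (b + 1) * f 1) = f (b ^ 2) + f 1 := by
      field_simp; ring
    exact lt_of_lt_of_eq h3 h4
  have q1 : f (b ^ 2 - b + 1) = (b ^ 2 - b + 1) ^ (-a) - (b ^ 3 - b + 1) ^ (-a) := by
    simp only [hf]
    rw [show b ^ 2 - b + 1 + (b ^ 3 - b ^ 2) = b ^ 3 - b + 1 from by ring]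
  have q2 : f b = b ^ (-a) - (b ^ 3 - b ^ 2 + b) ^ (-a) := by
    simp only [hf]
    rw [show b + (b ^ 3 - b ^ 2) = b ^ 3 - b ^ 2 + b from by ring]
  have p2 : ((b : ℝ) ^ 2) ^ (-a) = b ^ (-(2 * a)) := by
    rw [← Real.rpow_natCast b 2, ← Real.rpow_mul hb0.le]
    congr 1
    push_cast
    ring
  have p3 : ((b : ℝ) ^ 3) ^ (-a) = b ^ (-(3 * a)) := by
    rw [← Real.rpow_natCast b 3, ← Real.rpow_mul hb0.le]
    congr 1
    push_cast
    ring
  have q3 : f (b ^ 2) = b ^ (-(2 * a)) - b ^ (-(3 * a)) := by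
    simp only [hf]
    rw [show b ^ 2 + (b ^ 3 - b ^ 2) = b ^ 3 from by ring, p2, p3]
  have q4 : f 1 = 1 - (b ^ 3 - b ^ 2 + 1) ^ (-a) := by
    simp only [hf]
    rw [Real.one_rpow, show (1:ℝ) + (b ^ 3 - b ^ 2) = b ^ 3 - b ^ 2 + 1 from by ring]
  rw [q1, q2, q3, q4] at key
  linarith
end

section
/- Let b > 1, m > 0, n > 0, a > 0 be real, z_k := exp(−n(b−1)/(m·b^k)), and take q = 2 in the simplified register model, i.e. p̃(w, β_1, β_2) := z_w^{1/(b−1)}·(1−z_w)·z_{w−1}^{1−β_1}·(1−z_{w−1})^{β_1}·z_{w−2}^{1−β_2}·(1−z_{w−2})^{β_2}. Let c₀, c₁, c₂, c₃ be real numbers. Then (assuming absolute convergence) ∑_{w∈ℤ} ∑_{β_1,β_2∈{0,1}} p̃(w, β_1, β_2) · b^{−a·w} · c_{2β_1+β_2} = ((n(b−1)/m)^{−a}) · ∑_{w∈ℤ} z_w^{1/(b−1)}·(1−z_w)·(−ln z_w)^a · ( z_w^{b(b+1)}·(c₀ − c₁ − c₂ + c₃) + z_w^{b²}·(c₂ −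 c₃) + z_w^{b}·(c₁ − c₃) + c₃ ). -/
open Real Finset

/-- The simplified register probability mass with q = 2 extra bits. -/
noncomputable def ptilde2 (b m n : ℝ) (w : ℤ) (β₁ β₂ : Fin 2) : ℝ :=
  zf b m n w ^ (1 / (b - 1)) * (1 - zf b m n w) *
    (zf b m n (w - 1) ^ (1 - (β₁ : ℕ)) * (1 - zf b m n (w - 1)) ^ ((β₁ : ℕ))) *
    (zf b m n (w - 2) ^ (1 - (β₂ : ℕ)) * (1 - zf b m n (w - 2)) ^ ((β₂ : ℕ)))

lemma fgra_key (b m n a : ℝ) (hb : 1 < b) (hm : 0 < m) (hn : 0 < n)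
    (ha : 0 < a) (c₀ c₁ c₂ c₃ : ℝ) (w : ℤ) :
    (∑ β₁ : Fin 2, ∑ β₂ : Fin 2,
        ptilde2 b m n w β₁ β₂ * (b ^ (-(a * (w : ℝ))) *
          (if β₁ = 0 then (if β₂ = 0 then c₀ else c₁)
           else (if β₂ = 0 then c₂ else c₃))))
      = (n * (b - 1) / m) ^ (-a) *
          (zf b m n w ^ (1 / (b - 1)) * (1 - zf b m n w) *
            (-Real.log (zf b m n w)) ^ a *
            (zf b m n w ^ (b * (b + 1)) * (c₀ - c₁ - c₂ + c₃)
              + zf b m n w ^ (b ^ 2) * (c₂ - c₃) + zf b m n w ^ b * (c₁ - c₃) + c₃)) := by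
  have hb0 : (0:ℝ) < b := lt_trans one_pos hb
  have hbne : (b:ℝ) ≠ 0 := ne_of_gt hb0
  have hbw : (0:ℝ) < b ^ w := zpow_pos hb0 w
  have hz : 0 < zf b m n w := Real.exp_pos _
  have hb1 : (0:ℝ) < b - 1 := sub_pos.mpr hb
  have ht : 0 < n * (b - 1) / m := by positivity
  -- z_{w-1} = z_w ^ b
  have hz1 : zf b m n (w - 1) = zf b m n w ^ b := by
    rw [zf, zf, ← Real.exp_mul]
    congr 1
    have h1 : (b:ℝ) ^ w = b ^ (w - 1) * b := by
      rw [← zpow_add_one₀ hbne]; ring_nf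
    rw [h1]
    have : (b:ℝ) ^ (w-1) ≠ 0 := ne_of_gt (zpow_pos hb0 _)
    field_simp
  have hz2 : zf b m n (w - 2) = zf b m n w ^ (b ^ 2) := by
    rw [zf, zf, ← Real.exp_mul]
    congr 1
    have h1 : (b:ℝ) ^ w = b ^ (w - 2) * b ^ 2 := by
      rw [← zpow_natCast b 2, ← zpow_add₀ hbne]; norm_num
    rw [h1]
    have : (b:ℝ) ^ (w-2) ≠ 0 := ne_of_gt (zpow_pos hb0 _)
    field_simp
  have hlog : -Real.log (zf b m n w) = (n * (b - 1) / m) * (b ^ w)⁻¹ := by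
    rw [zf, Real.log_exp]
    field_simp
  -- key scalar identity
  have hB : (n * (b - 1) / m) ^ (-a) * (-Real.log (zf b m n w)) ^ a
      = b ^ (-(a * (w : ℝ))) := by
    rw [hlog, Real.mul_rpow (le_of_lt ht) (by positivity), ← mul_assoc,
      ← Real.rpow_add ht, neg_add_cancel, Real.rpow_zero, one_mul,
      ← zpow_neg, ← Real.rpow_intCast b (-w), ← Real.rpow_mul hb0.le]
    congr 1
    push_cast
    ring
  have hzz : zf b m n w ^ (b * (b + 1)) = zf b m n w ^ b * zf b m n w ^ (b ^ 2) := by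
    rw [← Real.rpow_add hz]; ring_nf
  simp only [Fin.sum_univ_two, ptilde2, hz1, hz2, hzz]
  norm_num
  rw [← hB]
  ring

/-- the exact expectation of the FGRA register contribution
g(r) = b^{−a⌊r/4⌋}·c_{r mod 4} with r = 4w + ⟨β₁β₂⟩₂. -/
theorem fgra_expectation_identity (b m n a : ℝ) (hb : 1 < b) (hm : 0 < m) (hn : 0 < n)
    (ha : 0 < a) (c₀ c₁ c₂ c₃ : ℝ)
    (hL : Summable fun w : ℤ =>
      ∑ β₁ : Fin 2, ∑ β₂ : Fin 2,
        |ptilde2 b m n w β₁ β₂ * (b ^ (-(a * (w : ℝ))) *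
          (if β₁ = 0 then (if β₂ = 0 then c₀ else c₁)
           else (if β₂ = 0 then c₂ else c₃)))|)
    (hR : Summable fun w : ℤ =>
      |zf b m n w ^ (1 / (b - 1)) * (1 - zf b m n w) * (-Real.log (zf b m n w)) ^ a *
        (zf b m n w ^ (b * (b + 1)) * (c₀ - c₁ - c₂ + c₃)
          + zf b m n w ^ (b ^ 2) * (c₂ - c₃) + zf b m n w ^ b * (c₁ - c₃) + c₃)|) :
    (∑' w : ℤ, ∑ β₁ : Fin 2, ∑ β₂ : Fin 2,
        ptilde2 b m n w β₁ β₂ * (b ^ (-(a * (w : ℝ))) *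
          (if β₁ = 0 then (if β₂ = 0 then c₀ else c₁)
           else (if β₂ = 0 then c₂ else c₃))))
      = (n * (b - 1) / m) ^ (-a) *
          ∑' w : ℤ, zf b m n w ^ (1 / (b - 1)) * (1 - zf b m n w) *
            (-Real.log (zf b m n w)) ^ a *
            (zf b m n w ^ (b * (b + 1)) * (c₀ - c₁ - c₂ + c₃)
              + zf b m n w ^ (b ^ 2) * (c₂ - c₃) + zf b m n w ^ b * (c₁ - c₃) + c₃) := by
  calc _ = ∑' w : ℤ, (n * (b - 1) / m) ^ (-a) *
          (zf b m n w ^ (1 / (b - 1)) * (1 - zf b m n w) *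
            (-Real.log (zf b m n w)) ^ a *
            (zf b m n w ^ (b * (b + 1)) * (c₀ - c₁ - c₂ + c₃)
              + zf b m n w ^ (b ^ 2) * (c₂ - c₃) + zf b m n w ^ b * (c₁ - c₃) + c₃)) :=
      tsum_congr (fun w => fgra_key b m n a hb hm hn ha c₀ c₁ c₂ c₃ w)
    _ = _ := tsum_mul_left
end

section
/- Let m be a positive real number, and let c₀, c₄, c₈, c₁₀ be nonnegative real numbers with c₀ + c₄ ≤ m. Define α := m + 3(c₀ + c₄ + c₈ + c₁₀), β := m − c₀ − c₄, and γ := 4c₀ + 2c₄ + 3c₈ + c₁₀, and suppose γ > 0. Define the log-likelihood ℓ(z) := γ·ln z + (c₁₀ + m − c₀)·ln(1−z) + (c₄ + c₁₀)·ln(1+z) for z ∈ (0,1). Then the stationarity equation ℓ′(z) = 0, i.e. γ/z + (c₀ − c₁₀ − m)/(1−z) + (c₄ + c₁₀)/(1+z) = 0, is equivalent on (0,1) to the quadratic equation α·z² + β·z − γ = 0, whose unique positive root is z* = (√(β² + 4αγ) − β)/(2α). Hence the maximum-likelihood estimate of z₂ is z* and (by invariance of ML estimators) the maximum-likelihood estimate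 of z₀ = z₂⁴ is (z*)⁴. -/
open Real

/-- the small-range maximum-likelihood estimator for UltraLogLog. -/
theorem small_range_ml_estimator (m c0 c4 c8 c10 : ℝ) (hm : 0 < m)
    (h0 : 0 ≤ c0) (h4 : 0 ≤ c4) (h8 : 0 ≤ c8) (h10 : 0 ≤ c10)
    (hle : c0 + c4 ≤ m)
    (α β γ : ℝ)
    (hα : α = m + 3 * (c0 + c4 + c8 + c10))
    (hβ : β = m - c0 - c4)
    (hγ : γ = 4 * c0 + 2 * c4 + 3 * c8 + c10)
    (hγpos : 0 < γ)
    (ℓ : ℝ → ℝ)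
    (hℓ : ∀ z : ℝ, ℓ z = γ * Real.log z + (c10 + m - c0) * Real.log (1 - z)
        + (c4 + c10) * Real.log (1 + z))
    (zstar : ℝ)
    (hzstar : zstar = (Real.sqrt (β ^ 2 + 4 * α * γ) - β) / (2 * α)) :
    (∀ z ∈ Set.Ioo (0 : ℝ) 1,
        deriv ℓ z = γ / z + (c0 - c10 - m) / (1 - z) + (c4 + c10) / (1 + z) ∧
        (deriv ℓ z = 0 ↔ α * z ^ 2 + β * z - γ = 0)) ∧
    0 < zstar ∧
    α * zstar ^ 2 + β * zstar - γ = 0 ∧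
    (∀ z : ℝ, 0 < z → α * z ^ 2 + β * z - γ = 0 → z = zstar) := by
  have hαpos : 0 < α := by nlinarith
  have hβnn : 0 ≤ β := by linarith
  set s := Real.sqrt (β ^ 2 + 4 * α * γ) with hs
  have hdisc : 0 ≤ β ^ 2 + 4 * α * γ := by nlinarith
  have hs2 : s ^ 2 = β ^ 2 + 4 * α * γ := Real.sq_sqrt hdisc
  have hsnn : 0 ≤ s := Real.sqrt_nonneg _
  have hsβ : β < s := by nlinarith [mul_pos hαpos hγpos]
  have hzpos : 0 < zstar := by
    rw [hzstar]
    exact div_pos (by linarith) (by linarith)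
  have hquad : α * zstar ^ 2 + β * zstar - γ = 0 := by
    rw [hzstar]
    field_simp
    nlinarith [hs2]
  refine ⟨?_, hzpos, hquad, ?_⟩
  · rintro z ⟨hz0, hz1⟩
    have h1z : (0:ℝ) < 1 - z := by linarith
    have h1z' : (0:ℝ) < 1 + z := by linarith
    have hd : deriv ℓ z = γ / z + (c0 - c10 - m) / (1 - z) + (c4 + c10) / (1 + z) := by
      have hℓeq : ℓ = fun z => γ * Real.log z + (c10 + m - c0) * Real.log (1 - z)
          + (c4 + c10) * Real.log (1 + z) := funext hℓ
      have hd1 : HasDerivAt (fun z : ℝ => Real.log z) (1 / z) z := by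
        simpa using Real.hasDerivAt_log hz0.ne'
      have hd2 : HasDerivAt (fun z : ℝ => Real.log (1 - z)) (-(1 / (1 - z))) z := by
        have := (Real.hasDerivAt_log h1z.ne').comp z ((hasDerivAt_id z).const_sub 1)
        simpa [Function.comp_def] using this
      have hd3 : HasDerivAt (fun z : ℝ => Real.log (1 + z)) (1 / (1 + z)) z := by
        have := (Real.hasDerivAt_log h1z'.ne').comp z ((hasDerivAt_id z).const_add 1)
        simpa [Function.comp_def] using this
      have : HasDerivAt ℓ (γ * (1 / z) + (c10 + m - c0) * (-(1 / (1 - z)))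
          + (c4 + c10) * (1 / (1 + z))) z := by
        rw [hℓeq]
        exact ((hd1.const_mul γ).add (hd2.const_mul (c10 + m - c0))).add
          (hd3.const_mul (c4 + c10))
      rw [this.deriv]
      field_simp [hz0.ne', h1z.ne', h1z'.ne']
      ring
    refine ⟨hd, ?_⟩
    rw [hd]
    have hkey : (γ / z + (c0 - c10 - m) / (1 - z) + (c4 + c10) / (1 + z))
        * (z * (1 - z) * (1 + z)) = -(α * z ^ 2 + β * z - γ) := by
      rw [hα, hβ, hγ]
      field_simp [hz0.ne', h1z.ne', h1z'.ne']
      ring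
    constructor
    · intro h
      have : -(α * z ^ 2 + β * z - γ) = 0 := by rw [← hkey, h, zero_mul]
      linarith
    · intro h
      have h2 : (γ / z + (c0 - c10 - m) / (1 - z) + (c4 + c10) / (1 + z))
          * (z * (1 - z) * (1 + z)) = 0 := by rw [hkey, h, neg_zero]
      have hne : z * (1 - z) * (1 + z) ≠ 0 := by positivity
      exact (mul_eq_zero.mp h2).resolve_right hne
  · intro z hz hzq
    have hfact : (z - zstar) * (α * (z + zstar) + β) = 0 := by
      linear_combination hzq - hquad
    have hpos : 0 < α * (z + zstar) + β := by nlinarith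
    rcases mul_eq_zero.mp hfact with h | h
    · linarith
    · linarith
end

section
/- Let a > 0 be real, c₀, c₁, c₂, c₃ real numbers, and define the cubic polynomial ψ(z) := z·(z·(z·(c₀ − c₁ − c₂ + c₃) + (c₂ − c₃)) + (c₁ − c₃)) + c₃. Then for every z ∈ (0,1) the following two series converge and are equal: (4^{−a}/(1−z)) · ∑_{w=0}^{∞} 2^{−a·w}·( z^{2^{−w−1}} − z^{2^{−w}} )·ψ( z^{2^{−w}} ) = (4^{−a}/(2 − 2^{−a})) · ( 2·ψ(z)·√z/(1+√z) + ∑_{w=1}^{∞} [ z^{2^{−w−1}}·( 2·ψ(z^{2^{−w}}) − (z^{2^{−w−1}} + z^{2^{−w}})·ψ(z^{2^{−w+1}}) ) ] / ( 2^{a·w}·∏_{j=1}^{w+1} (1 + z^{2^{−j}}) ) ). -/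
open Real Finset

/-- Term of the slowly converging series defining the large-range correction φ(z):
2^{−a·w}·(z^{2^{−w−1}} − z^{2^{−w}})·ψ(z^{2^{−w}}), for w = 0, 1, 2, …. -/
noncomputable def phiTermSlow (a : ℝ) (ψ : ℝ → ℝ) (z : ℝ) (w : ℕ) : ℝ :=
  (2 : ℝ) ^ (-(a * (w : ℝ))) *
    (z ^ ((2 : ℝ) ^ (-(w : ℤ) - 1)) - z ^ ((2 : ℝ) ^ (-(w : ℤ)))) *
    ψ (z ^ ((2 : ℝ) ^ (-(w : ℤ))))

/-- Term of the fast converging series: for paper index w + 1 (w = 0, 1, 2, …):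
z^{2^{−w−2}}·(2·ψ(z^{2^{−w−1}}) − (z^{2^{−w−2}} + z^{2^{−w−1}})·ψ(z^{2^{−w}}))
/ (2^{a(w+1)}·∏_{j=1}^{w+2}(1 + z^{2^{−j}})). -/
noncomputable def phiTermFast (a : ℝ) (ψ : ℝ → ℝ) (z : ℝ) (w : ℕ) : ℝ :=
  z ^ ((2 : ℝ) ^ (-(w : ℤ) - 2)) *
    (2 * ψ (z ^ ((2 : ℝ) ^ (-(w : ℤ) - 1))) -
      (z ^ ((2 : ℝ) ^ (-(w : ℤ) - 2)) + z ^ ((2 : ℝ) ^ (-(w : ℤ) - 1))) *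
        ψ (z ^ ((2 : ℝ) ^ (-(w : ℤ))))) /
    ((2 : ℝ) ^ (a * ((w : ℝ) + 1)) *
      ∏ j ∈ Finset.Icc 1 (w + 2), (1 + z ^ ((2 : ℝ) ^ (-(j : ℤ)))))

/-- `sIter z w = z^{2^{-w}}`. -/
noncomputable def sIter (z : ℝ) (w : ℕ) : ℝ := z ^ ((2 : ℝ) ^ (-(w : ℤ)))

/-- `pIter z k = ∏_{j=1}^{k} (1 + z^{2^{-j}})`. -/
noncomputable def pIter (z : ℝ) (k : ℕ) : ℝ := ∏ j ∈ Finset.Icc 1 k, (1 + sIter z j)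

/-- auxiliary sequence `tAux a ψ z w = 2^{-aw}·s_{w+1}·ψ(s_w)/P_{w+1}`. -/
noncomputable def tAux (a : ℝ) (ψ : ℝ → ℝ) (z : ℝ) (w : ℕ) : ℝ :=
  (2 : ℝ) ^ (-(a * (w : ℝ))) * sIter z (w + 1) * ψ (sIter z w) / pIter z (w + 1)

lemma sIter_succ_eq (z : ℝ) (w : ℕ) :
    z ^ ((2 : ℝ) ^ (-(w : ℤ) - 1)) = sIter z (w + 1) := by
  unfold sIter
  congr 2
  push_cast
  ring

lemma sIter_succ2_eq (z : ℝ) (w : ℕ) :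
    z ^ ((2 : ℝ) ^ (-(w : ℤ) - 2)) = sIter z (w + 2) := by
  unfold sIter
  congr 2
  push_cast
  ring

lemma sIter_pos (z : ℝ) (hz0 : 0 < z) (w : ℕ) : 0 < sIter z w :=
  Real.rpow_pos_of_pos hz0 _

lemma sIter_lt_one (z : ℝ) (hz0 : 0 < z) (hz1 : z < 1) (w : ℕ) : sIter z w < 1 :=
  Real.rpow_lt_one hz0.le hz1 (by positivity)

lemma sIter_sq (z : ℝ) (hz0 : 0 < z) (w : ℕ) : sIter z (w + 1) ^ 2 = sIter z w := by
  unfold sIter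
  rw [← Real.rpow_natCast (z ^ _) 2, ← Real.rpow_mul hz0.le]
  congr 1
  have : -((w : ℤ) + 1) + 1 = -(w : ℤ) := by ring
  push_cast
  rw [← this, zpow_add_one₀ (two_ne_zero)]

lemma pIter_pos (z : ℝ) (hz0 : 0 < z) (k : ℕ) : 0 < pIter z k := by
  unfold pIter
  exact Finset.prod_pos fun j _ => by have := sIter_pos z hz0 j; linarith

lemma pIter_succ (z : ℝ) (k : ℕ) :
    pIter z (k + 1) = pIter z k * (1 + sIter z (k + 1)) := by
  unfold pIter
  rw [Finset.prod_Icc_succ_top (by omega)]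

lemma pIter_one_sub (z : ℝ) (hz0 : 0 < z) (w : ℕ) :
    (1 - sIter z w) * pIter z w = 1 - z := by
  induction w with
  | zero =>
      unfold sIter pIter
      simp
  | succ k ih =>
      rw [pIter_succ]
      have h2 : sIter z (k + 1) ^ 2 = sIter z k := sIter_sq z hz0 k
      calc (1 - sIter z (k+1)) * (pIter z k * (1 + sIter z (k+1)))
          = (1 - sIter z (k+1) ^ 2) * pIter z k := by ring
        _ = (1 - sIter z k) * pIter z k := by rw [h2]
        _ = 1 - z := ih

lemma phiTermSlow_eq (a : ℝ) (ψ : ℝ → ℝ) (z : ℝ) (hz0 : 0 < z) (w : ℕ) :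
    phiTermSlow a ψ z w = (1 - z) * tAux a ψ z w := by
  have hP : pIter z (w + 1) ≠ 0 := (pIter_pos z hz0 (w + 1)).ne'
  have h1z : (1 - z) = (1 - sIter z (w+1)) * pIter z (w+1) := (pIter_one_sub z hz0 (w+1)).symm
  have hsq : sIter z (w + 1) ^ 2 = sIter z w := sIter_sq z hz0 w
  unfold phiTermSlow tAux
  rw [sIter_succ_eq]
  rw [show z ^ ((2:ℝ) ^ (-(w:ℤ))) = sIter z w from rfl]
  rw [h1z, ← hsq]
  field_simp

lemma phiTermFast_eq (a : ℝ) (ψ : ℝ → ℝ) (z : ℝ) (hz0 : 0 < z) (w : ℕ) :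
    phiTermFast a ψ z w = 2 * tAux a ψ z (w + 1) - (2:ℝ) ^ (-a) * tAux a ψ z w := by
  have hs2 := sIter_pos z hz0 (w+2)
  have hP1 : 0 < pIter z (w + 1) := pIter_pos z hz0 (w + 1)
  have hsq : sIter z (w + 2) ^ 2 = sIter z (w + 1) := sIter_sq z hz0 (w + 1)
  have hpow2 : (2:ℝ) ^ (-(a * (((w+1 : ℕ)) : ℝ))) = (2:ℝ)^(-a) * (2:ℝ)^(-(a*(w:ℝ))) := by
    rw [← Real.rpow_add two_pos]
    congr 1
    push_cast
    ring
  have hAinv : (2:ℝ)^(a*((w:ℝ)+1)) = ((2:ℝ)^(-a) * (2:ℝ)^(-(a*(w:ℝ))))⁻¹ := by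
    rw [← Real.rpow_add two_pos, ← Real.rpow_neg (by norm_num : (0:ℝ) ≤ 2)]
    congr 1
    ring
  unfold phiTermFast tAux
  rw [sIter_succ_eq, sIter_succ2_eq,
      show z ^ ((2:ℝ) ^ (-(w:ℤ))) = sIter z w from rfl,
      show (∏ j ∈ Finset.Icc 1 (w + 2), (1 + z ^ ((2 : ℝ) ^ (-(j : ℤ))))) = pIter z (w+2) from rfl,
      hpow2, hAinv, pIter_succ z (w+1)]
  have hB : (0:ℝ) < (2:ℝ)^(-a) := by positivity
  have hC : (0:ℝ) < (2:ℝ)^(-(a*(w:ℝ))) := by positivity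
  rw [← hsq]
  have h1s : (1 : ℝ) + sIter z (w+2) ≠ 0 := by linarith
  field_simp

/-- the two series representations of the large-range correction φ(z)
of the FGRA estimator converge and are equal. -/
theorem phi_series_identity (a : ℝ) (ha : 0 < a) (c₀ c₁ c₂ c₃ : ℝ)
    (ψ : ℝ → ℝ)
    (hψ : ∀ z : ℝ, ψ z =
      z * (z * (z * (c₀ - c₁ - c₂ + c₃) + (c₂ - c₃)) + (c₁ - c₃)) + c₃)
    (z : ℝ) (hz : z ∈ Set.Ioo (0 : ℝ) 1) :
    Summable (phiTermSlow a ψ z) ∧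
    Summable (phiTermFast a ψ z) ∧
    ((4 : ℝ) ^ (-a) / (1 - z)) * (∑' w : ℕ, phiTermSlow a ψ z w)
      = ((4 : ℝ) ^ (-a) / (2 - (2 : ℝ) ^ (-a))) *
          (2 * ψ z * Real.sqrt z / (1 + Real.sqrt z) + ∑' w : ℕ, phiTermFast a ψ z w) := by
  obtain ⟨hz0, hz1⟩ := hz
  set M : ℝ := |c₀ - c₁ - c₂ + c₃| + |c₂ - c₃| + |c₁ - c₃| + |c₃| with hM
  have hψb : ∀ x : ℝ, 0 ≤ x → x ≤ 1 → |ψ x| ≤ M := by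
    intro x h0 h1
    rw [hψ]
    have step : ∀ (y d B : ℝ), |y| ≤ B → |x * y + d| ≤ B + |d| := by
      intro y d B hy
      calc |x * y + d| ≤ |x * y| + |d| := abs_add_le _ _
        _ = |x| * |y| + |d| := by rw [abs_mul]
        _ ≤ B + |d| := by
            have hx : |x| ≤ 1 := abs_le.mpr ⟨by linarith, h1⟩
            nlinarith [abs_nonneg y, abs_nonneg x]
    have h1' := step (c₀ - c₁ - c₂ + c₃) (c₂ - c₃) _ le_rfl
    have h2' := step _ (c₁ - c₃) _ h1'
    have h3' := step _ c₃ _ h2'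
    rw [hM]; linarith
  have hr1 : (2:ℝ) ^ (-a) < 1 := Real.rpow_lt_one_of_one_lt_of_neg one_lt_two (by linarith)
  have hr0 : (0:ℝ) < (2:ℝ) ^ (-a) := by positivity
  have htb : ∀ w, |tAux a ψ z w| ≤ M * ((2:ℝ) ^ (-a)) ^ w := by
    intro w
    have hs1 := sIter_pos z hz0 (w + 1)
    have hs1' := sIter_lt_one z hz0 hz1 (w + 1)
    have hs0 := sIter_pos z hz0 w
    have hs0' := sIter_lt_one z hz0 hz1 w
    have hPpos : 0 < pIter z (w + 1) := pIter_pos z hz0 (w + 1)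
    have hPge : 1 ≤ pIter z (w + 1) := by
      unfold pIter
      have hle : ∀ i ∈ Finset.Icc 1 (w+1), (fun _ => (1:ℝ)) i ≤ (fun j => 1 + sIter z j) i := by
        intro i _
        simp only
        have := sIter_pos z hz0 i
        linarith
      have := Finset.prod_le_prod (s := Finset.Icc 1 (w+1)) (f := fun _ => (1:ℝ))
        (g := fun j => 1 + sIter z j) (fun i _ => by norm_num) hle
      simpa using this
    have hψs := hψb (sIter z w) hs0.le hs0'.le
    have hMnn : 0 ≤ M := (abs_nonneg _).trans hψs
    have hpow : (2:ℝ) ^ (-(a * (w:ℝ))) = ((2:ℝ) ^ (-a)) ^ w := by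
      rw [← Real.rpow_natCast ((2:ℝ) ^ (-a)) w, ← Real.rpow_mul (by norm_num : (0:ℝ) ≤ 2)]
      congr 1; ring
    have h1 : |tAux a ψ z w|
        = (2:ℝ) ^ (-(a * (w:ℝ))) * sIter z (w + 1) * |ψ (sIter z w)| / pIter z (w + 1) := by
      unfold tAux
      rw [abs_div, abs_mul, abs_mul, abs_of_pos (by positivity), abs_of_pos hs1,
        abs_of_pos hPpos]
    rw [h1]
    calc (2:ℝ) ^ (-(a * (w:ℝ))) * sIter z (w + 1) * |ψ (sIter z w)| / pIter z (w + 1)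
        ≤ (2:ℝ) ^ (-(a * (w:ℝ))) * 1 * M / 1 := by
          gcongr
        _ = M * ((2:ℝ) ^ (-a)) ^ w := by rw [hpow]; ring
  have ht : Summable (tAux a ψ z) := by
    refine Summable.of_norm_bounded ((summable_geometric_of_lt_one hr0.le hr1).mul_left M) ?_
    intro w; simpa [Real.norm_eq_abs] using htb w
  have hslow_eq : phiTermSlow a ψ z = fun w => (1 - z) * tAux a ψ z w :=
    funext (phiTermSlow_eq a ψ z hz0)
  have hfast_eq : phiTermFast a ψ z
      = fun w => 2 * tAux a ψ z (w + 1) - (2:ℝ) ^ (-a) * tAux a ψ z w :=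
    funext (phiTermFast_eq a ψ z hz0)
  have ht1 : Summable (fun w => tAux a ψ z (w + 1)) := (summable_nat_add_iff 1).2 ht
  have hslow : Summable (phiTermSlow a ψ z) := by rw [hslow_eq]; exact ht.mul_left _
  have hfast : Summable (phiTermFast a ψ z) := by
    rw [hfast_eq]; exact (ht1.mul_left 2).sub (ht.mul_left _)
  refine ⟨hslow, hfast, ?_⟩
  have hts : ∑' w, phiTermSlow a ψ z w = (1 - z) * ∑' w, tAux a ψ z w := by
    rw [hslow_eq]; exact tsum_mul_left
  have htf : ∑' w, phiTermFast a ψ z w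
      = 2 * (∑' w, tAux a ψ z (w + 1)) - (2:ℝ) ^ (-a) * ∑' w, tAux a ψ z w := by
    rw [hfast_eq, Summable.tsum_sub (ht1.mul_left 2) (ht.mul_left _), tsum_mul_left, tsum_mul_left]
  have hshift : ∑' w, tAux a ψ z w = tAux a ψ z 0 + ∑' w, tAux a ψ z (w + 1) :=
    Summable.tsum_eq_zero_add ht
  have ht0 : tAux a ψ z 0 = ψ z * Real.sqrt z / (1 + Real.sqrt z) := by
    unfold tAux
    have h1 : sIter z 0 = z := by unfold sIter; norm_num
    have h2 : sIter z 1 = Real.sqrt z := by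
      unfold sIter
      rw [Real.sqrt_eq_rpow]
      congr 1
      norm_num
    have h3 : pIter z 1 = 1 + Real.sqrt z := by
      unfold pIter
      rw [show Finset.Icc 1 1 = {1} from rfl, Finset.prod_singleton, h2]
    rw [h1, h2, h3]
    simp
    ring
  have hgt : 2 * ψ z * Real.sqrt z / (1 + Real.sqrt z) = 2 * tAux a ψ z 0 := by
    rw [ht0]; ring
  rw [hts, htf, hshift, hgt]
  have h1z : (1:ℝ) - z ≠ 0 := by linarith
  have hb : (2:ℝ) - (2:ℝ) ^ (-a) ≠ 0 := by linarith
  field_simp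
  ring
end
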